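/- arXiv:2403.18011 — 6 statements merged into one kernel-verified Lean document; each statement's English description precedes it below -/
import Mathlib

section
/- The Λ-deformed bracket on generators, defined by {w^p_{m,a}, w^q_{n,b}}_Λ = (m(q-1)-n(p-1)) w^{p+q-2}_{m+n,a+b} - Λ(a(q-2)-b(p-2)) w^{p+q-1}_{m+n,a+b}, satisfies the Jacobi identity: for all indices, {w^p_{m,a},{w^q_{n,b},w^r_{k,c}}} + {w^q_{n,b},{w^r_{k,c},w^p_{m,a}}} + {w^r_{k,c},{w^p_{m,a},w^q_{n,b}}} = 0. -/
/-- Index set for the generators `w^p_{m,a}`: triples `(p, m, a)` of rationals. -/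
abbrev Idx : Type := ℚ × ℚ × ℚ

/-- The Λ-deformed bracket of two basis generators:
`{w^p_{m,a}, w^q_{n,b}}_Λ = (m(q-1)-n(p-1)) w^{p+q-2}_{m+n,a+b}
                            - Λ(a(q-2)-b(p-2)) w^{p+q-1}_{m+n,a+b}`. -/
noncomputable def wbr {K : Type*} [Field K] [CharZero K] (Λ : K) (i j : Idx) : Idx →₀ K :=
  ((i.2.1 * (j.1 - 1) - j.2.1 * (i.1 - 1) : ℚ) : K) •
      Finsupp.single (i.1 + j.1 - 2, i.2.1 + j.2.1, i.2.2 + j.2.2) (1 : K)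
    - (Λ * ((i.2.2 * (j.1 - 2) - j.2.2 * (i.1 - 2) : ℚ) : K)) •
      Finsupp.single (i.1 + j.1 - 1, i.2.1 + j.2.1, i.2.2 + j.2.2) (1 : K)

/-- Bilinear extension of the bracket to the free module on the generators. -/
noncomputable def br {K : Type*} [Field K] [CharZero K] (Λ : K) (f g : Idx →₀ K) : Idx →₀ K :=
  f.sum fun i x => g.sum fun j y => (x * y) • wbr Λ i j

section

variable {K : Type*} [Field K] [CharZero K] (Λ : K)

lemma wbr_skew (i j : Idx) : wbr Λ i j = -wbr Λ j i := by
  simp only [wbr]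
  rw [add_comm j.1 i.1, add_comm j.2.1 i.2.1, add_comm j.2.2 i.2.2]
  push_cast
  module

lemma br_skew (f g : Idx →₀ K) : br Λ f g = -br Λ g f := by
  rw [br, br, Finsupp.sum_comm, ← Finsupp.sum_neg]
  refine Finsupp.sum_congr fun j _ => ?_
  rw [← Finsupp.sum_neg]
  refine Finsupp.sum_congr fun i _ => ?_
  rw [wbr_skew Λ i j, smul_neg, mul_comm]

lemma br_single_one_left (i : Idx) (g : Idx →₀ K) :
    br Λ (Finsupp.single i 1) g = Finsupp.linearCombination K (wbr Λ i) g := by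
  rw [br, Finsupp.linearCombination_apply, Finsupp.sum_single_index]
  · simp only [one_mul]
  · simp [Finsupp.sum]

lemma br_jacobi_single (i j k : Idx) :
    br Λ (Finsupp.single i 1) (br Λ (Finsupp.single j 1) (Finsupp.single k 1))
      + br Λ (Finsupp.single j 1) (br Λ (Finsupp.single k 1) (Finsupp.single i 1))
      + br Λ (Finsupp.single k 1) (br Λ (Finsupp.single i 1) (Finsupp.single j 1)) = 0 := by
  obtain ⟨p, m, a⟩ := i
  obtain ⟨q, n, b⟩ := j
  obtain ⟨r, l, c⟩ := k
  simp only [br_single_one_left, Finsupp.linearCombination_single, one_smul, wbr, map_sub,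
    map_smul]
  push_cast
  -- `ring_nf` identifies the indices `p + (q + r - 2) - 2`, `q + (r + p - 2) - 2`, … of coinciding
  -- generators; the Jacobiator then collects into the generators of weight
  -- `p + q + r - 4`, `p + q + r - 3`, `p + q + r - 2`, whose coefficients vanish identically.
  ring_nf
  module

end

/-- The Λ-deformed celestial chiral bracket is antisymmetric and satisfies the
Jacobi identity, hence defines a Lie algebra. -/
theorem lambda_deformed_bracket_jacobi {K : Type*} [Field K] [CharZero K] (Λ : K) :
    (∀ f g : Idx →₀ K, br Λ f g = - br Λ g f) ∧
    (∀ i j k : Idx,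
      br Λ (Finsupp.single i 1) (br Λ (Finsupp.single j 1) (Finsupp.single k 1))
      + br Λ (Finsupp.single j 1) (br Λ (Finsupp.single k 1) (Finsupp.single i 1))
      + br Λ (Finsupp.single k 1) (br Λ (Finsupp.single i 1) (Finsupp.single j 1)) = 0) :=
  ⟨br_skew Λ, br_jacobi_single Λ⟩
end

section
/- For twistor functions w^p_{m,a} = (μ⁰)^{p+m-1}(μ¹)^{p-m-1}/(2 λ₀^{p-a-2} λ₁^{p+a-2}), the Λ-deformed Poisson bracket {f,g}_Λ = ∂f/∂μ⁰ ∂g/∂μ¹ − ∂f/∂μ¹ ∂g/∂μ⁰ + Λ(∂f/∂λ₀ ∂g/∂λ₁ − ∂f/∂λ₁ ∂g/∂λ₀) evaluates to {w^p_{m,a}, w^q_{n,b}}_Λ = (m(q-1)-n(p-1)) w^{p+q-2}_{m+n,a+b} − Λ(a(q-2)-b(p-2)) w^{p+q-1}_{m+n,a+b}. -/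
/-- The Λ-deformed Poisson bracket
`{f,g}_Λ = ∂f/∂μ⁰ ∂g/∂μ¹ − ∂f/∂μ¹ ∂g/∂μ⁰ + Λ(∂f/∂λ₀ ∂g/∂λ₁ − ∂f/∂λ₁ ∂g/∂λ₀)`
on functions of the four twistor coordinates `(μ⁰, μ¹, λ₀, λ₁)`. -/
noncomputable def pb (Λ : ℂ) (f g : ℂ → ℂ → ℂ → ℂ → ℂ) : ℂ → ℂ → ℂ → ℂ → ℂ :=
  fun x y s t =>
    deriv (fun u => f u y s t) x * deriv (fun u => g x u s t) y
    - deriv (fun u => f x u s t) y * deriv (fun u => g u y s t) x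
    + Λ * (deriv (fun u => f x y u t) s * deriv (fun u => g x y s u) t
         - deriv (fun u => f x y s u) t * deriv (fun u => g x y u t) s)

/-- The Laurent monomial `c · (μ⁰)^i (μ¹)^j λ₀^k λ₁^l`. -/
noncomputable def mon (c : ℂ) (i j k l : ℤ) : ℂ → ℂ → ℂ → ℂ → ℂ :=
  fun x y s t => c * x ^ i * y ^ j * s ^ k * t ^ l

/-!
Partial derivatives of a Laurent monomial are Laurent monomials, so the bracket of two monomials
is a sum of two monomials whose coefficients are the determinants `i j' - j i'` and `k l' - l k'`
of the exponent pairs. For the generators `w^p_{m,a}`, `w^q_{n,b}` these determinants equal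
`2 (m(q-1) - n(p-1))` and `-2 (a(q-2) - b(p-2))`; the factor `2` cancels against the
normalisation `1/2` of `w`.
-/

section Monomial

variable (c : ℂ) (i j k l : ℤ) {x y s t : ℂ}

theorem mon_mul_coeff (d : ℂ) :
    mon (c * d) i j k l x y s t = c * mon d i j k l x y s t := by
  simp only [mon]; ring

theorem deriv_mon_x (hx : x ≠ 0 ∨ 0 ≤ i) :
    deriv (fun u => mon c i j k l u y s t) x = mon (i * c) (i - 1) j k l x y s t := by
  simp only [mon]
  rw [((((hasDerivAt_zpow i x hx).const_mul c).mul_const (y ^ j)).mul_const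
    (s ^ k)).mul_const (t ^ l) |>.deriv]
  ring

theorem deriv_mon_y (hy : y ≠ 0 ∨ 0 ≤ j) :
    deriv (fun u => mon c i j k l x u s t) y = mon (j * c) i (j - 1) k l x y s t := by
  simp only [mon]
  rw [((((hasDerivAt_zpow j y hy).const_mul (c * x ^ i)).mul_const (s ^ k)).mul_const
    (t ^ l)) |>.deriv]
  ring

theorem deriv_mon_s (hs : s ≠ 0 ∨ 0 ≤ k) :
    deriv (fun u => mon c i j k l x y u t) s = mon (k * c) i j (k - 1) l x y s t := by
  simp only [mon]
  rw [(((hasDerivAt_zpow k s hs).const_mul (c * x ^ i * y ^ j)).mul_const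
    (t ^ l)) |>.deriv]
  ring

theorem deriv_mon_t (ht : t ≠ 0 ∨ 0 ≤ l) :
    deriv (fun u => mon c i j k l x y s u) t = mon (l * c) i j k (l - 1) x y s t := by
  simp only [mon]
  rw [((hasDerivAt_zpow l t ht).const_mul (c * x ^ i * y ^ j * s ^ k)) |>.deriv]
  ring

theorem pb_mon_mon (Λ c' : ℂ) (i' j' k' l' : ℤ)
    (hx : x ≠ 0) (hy : y ≠ 0) (hs : s ≠ 0) (ht : t ≠ 0) :
    pb Λ (mon c i j k l) (mon c' i' j' k' l') x y s t
      = ((i : ℂ) * j' - j * i') *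
          mon (c * c') (i + i' - 1) (j + j' - 1) (k + k') (l + l') x y s t
        + Λ * ((k : ℂ) * l' - l * k') *
          mon (c * c') (i + i') (j + j') (k + k' - 1) (l + l' - 1) x y s t := by
  simp only [pb, deriv_mon_x _ _ _ _ _ (.inl hx), deriv_mon_y _ _ _ _ _ (.inl hy),
    deriv_mon_s _ _ _ _ _ (.inl hs), deriv_mon_t _ _ _ _ _ (.inl ht)]
  simp only [mon, zpow_add₀ hx, zpow_sub₀ hx, zpow_add₀ hy, zpow_sub₀ hy,
    zpow_add₀ hs, zpow_sub₀ hs, zpow_add₀ ht, zpow_sub₀ ht, zpow_one]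
  ring

end Monomial

theorem poisson_bracket_of_generators_general (Λ : ℂ) (p m a q n b : ℚ)
    (k₁ k₂ e₁ e₂ l₁ l₂ g₁ g₂ : ℤ)
    (h₁ : (k₁ : ℚ) = p + m - 1) (h₂ : (k₂ : ℚ) = p - m - 1)
    (h₃ : (e₁ : ℚ) = a + 2 - p) (h₄ : (e₂ : ℚ) = 2 - p - a)
    (h₅ : (l₁ : ℚ) = q + n - 1) (h₆ : (l₂ : ℚ) = q - n - 1)
    (h₇ : (g₁ : ℚ) = b + 2 - q) (h₈ : (g₂ : ℚ) = 2 - q - b)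
    (x y s t : ℂ) (hx : x ≠ 0) (hy : y ≠ 0) (hs : s ≠ 0) (ht : t ≠ 0) :
    pb Λ (mon (1/2) k₁ k₂ e₁ e₂) (mon (1/2) l₁ l₂ g₁ g₂) x y s t
      = ((m * (q - 1) - n * (p - 1) : ℚ) : ℂ) *
          mon (1/2) (k₁ + l₁ - 1) (k₂ + l₂ - 1) (e₁ + g₁) (e₂ + g₂) x y s t
        - Λ * ((a * (q - 2) - b * (p - 2) : ℚ) : ℂ) *
          mon (1/2) (k₁ + l₁) (k₂ + l₂) (e₁ + g₁ - 1) (e₂ + g₂ - 1) x y s t := by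
  have hmu : (k₁ * l₂ - k₂ * l₁ : ℂ) = 2 * ((m * (q - 1) - n * (p - 1) : ℚ) : ℂ) := by
    exact_mod_cast (show (k₁ * l₂ - k₂ * l₁ : ℚ) = 2 * (m * (q - 1) - n * (p - 1)) by
      rw [h₁, h₂, h₅, h₆]; ring)
  have hlam : (e₁ * g₂ - e₂ * g₁ : ℂ) = -2 * ((a * (q - 2) - b * (p - 2) : ℚ) : ℂ) := by
    exact_mod_cast (show (e₁ * g₂ - e₂ * g₁ : ℚ) = -2 * (a * (q - 2) - b * (p - 2)) by
      rw [h₃, h₄, h₇, h₈]; ring)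
  rw [pb_mon_mon _ _ _ _ _ _ _ _ _ _ _ hx hy hs ht, mon_mul_coeff, mon_mul_coeff, hmu, hlam]
  ring

/-- For the twistor functions
`w^p_{m,a} = (μ⁰)^{p+m-1} (μ¹)^{p-m-1} / (2 λ₀^{p-a-2} λ₁^{p+a-2})`,
the Λ-deformed Poisson bracket evaluates to
`{w^p_{m,a}, w^q_{n,b}}_Λ = (m(q-1)-n(p-1)) w^{p+q-2}_{m+n,a+b}
                            − Λ(a(q-2)-b(p-2)) w^{p+q-1}_{m+n,a+b}`. -/
theorem poisson_bracket_of_generators (Λ : ℂ) (p m a q n b : ℚ)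
    (k₁ k₂ e₁ e₂ l₁ l₂ g₁ g₂ : ℤ)
    (hk₁ : 0 ≤ k₁) (hk₂ : 0 ≤ k₂) (hl₁ : 0 ≤ l₁) (hl₂ : 0 ≤ l₂)
    (h₁ : (k₁ : ℚ) = p + m - 1) (h₂ : (k₂ : ℚ) = p - m - 1)
    (h₃ : (e₁ : ℚ) = a + 2 - p) (h₄ : (e₂ : ℚ) = 2 - p - a)
    (h₅ : (l₁ : ℚ) = q + n - 1) (h₆ : (l₂ : ℚ) = q - n - 1)
    (h₇ : (g₁ : ℚ) = b + 2 - q) (h₈ : (g₂ : ℚ) = 2 - q - b)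
    (x y s t : ℂ) (hx : x ≠ 0) (hy : y ≠ 0) (hs : s ≠ 0) (ht : t ≠ 0) :
    pb Λ (mon (1/2) k₁ k₂ e₁ e₂) (mon (1/2) l₁ l₂ g₁ g₂) x y s t
      = ((m * (q - 1) - n * (p - 1) : ℚ) : ℂ) *
          mon (1/2) (k₁ + l₁ - 1) (k₂ + l₂ - 1) (e₁ + g₁) (e₂ + g₂) x y s t
        - Λ * ((a * (q - 2) - b * (p - 2) : ℚ) : ℂ) *
          mon (1/2) (k₁ + l₁) (k₂ + l₂) (e₁ + g₁ - 1) (e₂ + g₂ - 1) x y s t :=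
  poisson_bracket_of_generators_general Λ p m a q n b k₁ k₂ e₁ e₂ l₁ l₂ g₁ g₂ h₁ h₂ h₃ h₄ h₅ h₆ h₇
    h₈ x y s t hx hy hs ht
end

section
/- For Λ=0, the Poisson bracket {f,g} = ∂f/∂μ⁰ ∂g/∂μ¹ − ∂f/∂μ¹ ∂g/∂μ⁰ applied to the monomials w^p_{m,a} gives {w^p_{m,a}, w^q_{n,b}} = (m(q-1)-n(p-1)) w^{p+q-2}_{m+n,a+b}. -/
/-- The Λ = 0 Poisson bracket `{f,g} = ∂f/∂μ⁰ ∂g/∂μ¹ − ∂f/∂μ¹ ∂g/∂μ⁰` on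
functions of the four twistor coordinates `(μ⁰, μ¹, λ₀, λ₁)`. -/
noncomputable def pb0 (f g : ℂ → ℂ → ℂ → ℂ → ℂ) : ℂ → ℂ → ℂ → ℂ → ℂ :=
  fun x y s t =>
    deriv (fun u => f u y s t) x * deriv (fun u => g x u s t) y
    - deriv (fun u => f x u s t) y * deriv (fun u => g u y s t) x

/-! The bracket of two Laurent monomials in `μ⁰, μ¹` is the product monomial with the exponents
of `μ⁰` and `μ¹` each lowered by one, weighted by the determinant `i j' - j i'` of the two
exponent vectors. For `w^p_{m,a}` and `w^q_{n,b}` this determinant is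
`(p+m-1)(q-n-1) - (p-m-1)(q+n-1) = 2 (m(q-1) - n(p-1))`, and its factor `2` turns the
coefficient `1/2 · 1/2` of the product into the `1/2` of `w^{p+q-2}_{m+n,a+b}`. -/

lemma deriv_mon_fst (c : ℂ) (i j k l : ℤ) (x y s t : ℂ) :
    deriv (fun u => mon c i j k l u y s t) x = i * mon c (i - 1) j k l x y s t := by
  simp only [mon, deriv_mul_const_field, deriv_const_mul_field, deriv_zpow]
  ring

lemma deriv_mon_snd (c : ℂ) (i j k l : ℤ) (x y s t : ℂ) :
    deriv (fun u => mon c i j k l x u s t) y = j * mon c i (j - 1) k l x y s t := by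
  simp only [mon, deriv_mul_const_field, deriv_const_mul_field, deriv_zpow]
  ring

lemma mon_mul_mon (c d : ℂ) (i j k l i' j' k' l' : ℤ) {x y s t : ℂ}
    (hx : x ≠ 0) (hy : y ≠ 0) (hs : s ≠ 0) (ht : t ≠ 0) :
    mon c i j k l x y s t * mon d i' j' k' l' x y s t
      = mon (c * d) (i + i') (j + j') (k + k') (l + l') x y s t := by
  simp only [mon, zpow_add₀ hx, zpow_add₀ hy, zpow_add₀ hs, zpow_add₀ ht]
  ring

lemma pb0_mon_mon (c d : ℂ) (i j k l i' j' k' l' : ℤ) {x y s t : ℂ}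
    (hx : x ≠ 0) (hy : y ≠ 0) (hs : s ≠ 0) (ht : t ≠ 0) :
    pb0 (mon c i j k l) (mon d i' j' k' l') x y s t
      = (i * j' - j * i') * mon (c * d) (i + i' - 1) (j + j' - 1) (k + k') (l + l') x y s t := by
  have h₁ := mon_mul_mon c d (i - 1) j k l i' (j' - 1) k' l' hx hy hs ht
  have h₂ := mon_mul_mon c d i (j - 1) k l (i' - 1) j' k' l' hx hy hs ht
  rw [show i - 1 + i' = i + i' - 1 by ring, show j + (j' - 1) = j + j' - 1 by ring] at h₁
  rw [show i + (i' - 1) = i + i' - 1 by ring, show j - 1 + j' = j + j' - 1 by ring] at h₂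
  simp only [pb0, deriv_mon_fst, deriv_mon_snd]
  linear_combination ((i : ℂ) * j') * h₁ - ((j : ℂ) * i') * h₂

theorem flat_poisson_bracket_of_generators_general (p m q n : ℚ)
    (k₁ k₂ e₁ e₂ l₁ l₂ g₁ g₂ : ℤ)
    (h₁ : (k₁ : ℚ) = p + m - 1) (h₂ : (k₂ : ℚ) = p - m - 1)
    (h₅ : (l₁ : ℚ) = q + n - 1) (h₆ : (l₂ : ℚ) = q - n - 1)
    (x y s t : ℂ) (hx : x ≠ 0) (hy : y ≠ 0) (hs : s ≠ 0) (ht : t ≠ 0) :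
    pb0 (mon (1/2) k₁ k₂ e₁ e₂) (mon (1/2) l₁ l₂ g₁ g₂) x y s t
      = ((m * (q - 1) - n * (p - 1) : ℚ) : ℂ) *
          mon (1/2) (k₁ + l₁ - 1) (k₂ + l₂ - 1) (e₁ + g₁) (e₂ + g₂) x y s t := by
  have hdet : (k₁ * l₂ - k₂ * l₁ : ℚ) = 2 * (m * (q - 1) - n * (p - 1)) := by
    rw [h₁, h₂, h₅, h₆]; ring
  have hdetℂ : (k₁ * l₂ - k₂ * l₁ : ℂ) = 2 * ((m * (q - 1) - n * (p - 1) : ℚ) : ℂ) := by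
    exact_mod_cast congrArg (fun r : ℚ => (r : ℂ)) hdet
  rw [pb0_mon_mon _ _ _ _ _ _ _ _ _ _ hx hy hs ht]
  simp only [mon]
  linear_combination (1 / 4 * x ^ (k₁ + l₁ - 1) * y ^ (k₂ + l₂ - 1) * s ^ (e₁ + g₁)
    * t ^ (e₂ + g₂)) * hdetℂ

/-- For `w^p_{m,a} = (1/2)(μ⁰)^{p+m-1} (μ¹)^{p-m-1} λ₀^{a+2-p} λ₁^{-(p+a-2)}`,
the canonical Poisson bracket in the μ-variables gives
`{w^p_{m,a}, w^q_{n,b}} = (m(q-1)-n(p-1)) w^{p+q-2}_{m+n,a+b}`. -/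
theorem flat_poisson_bracket_of_generators (p m a q n b : ℚ)
    (k₁ k₂ e₁ e₂ l₁ l₂ g₁ g₂ : ℤ)
    (hk₁ : 0 ≤ k₁) (hk₂ : 0 ≤ k₂) (hl₁ : 0 ≤ l₁) (hl₂ : 0 ≤ l₂)
    (h₁ : (k₁ : ℚ) = p + m - 1) (h₂ : (k₂ : ℚ) = p - m - 1)
    (h₃ : (e₁ : ℚ) = a + 2 - p) (h₄ : (e₂ : ℚ) = 2 - p - a)
    (h₅ : (l₁ : ℚ) = q + n - 1) (h₆ : (l₂ : ℚ) = q - n - 1)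
    (h₇ : (g₁ : ℚ) = b + 2 - q) (h₈ : (g₂ : ℚ) = 2 - q - b)
    (x y s t : ℂ) (hx : x ≠ 0) (hy : y ≠ 0) (hs : s ≠ 0) (ht : t ≠ 0) :
    pb0 (mon (1/2) k₁ k₂ e₁ e₂) (mon (1/2) l₁ l₂ g₁ g₂) x y s t
      = ((m * (q - 1) - n * (p - 1) : ℚ) : ℂ) *
          mon (1/2) (k₁ + l₁ - 1) (k₂ + l₂ - 1) (e₁ + g₁) (e₂ + g₂) x y s t :=
  flat_poisson_bracket_of_generators_general p m q n k₁ k₂ e₁ e₂ l₁ l₂ g₁ g₂ h₁ h₂ h₅ h₆ x y s t hx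
    hy hs ht
end

section
/- The Poincaré-patch bracket on generators, {ŵ^p_{m,a}, ŵ^q_{n,b}}^P = ((p+m-1)(q-b-2)-(q+n-1)(p-a-2)) ŵ^{p+q-3/2}_{m+n-1/2, a+b-1/2} + ((p-m-1)(q+b-2)-(q-n-1)(p+a-2)) ŵ^{p+q-3/2}_{m+n+1/2, a+b+1/2}, satisfies antisymmetry and the Jacobi identity. -/
/-- The Poincaré-patch bracket of two basis generators:
`{ŵ^p_{m,a}, ŵ^q_{n,b}}^P
  = ((p+m-1)(q-b-2)-(q+n-1)(p-a-2)) ŵ^{p+q-3/2}_{m+n-1/2, a+b-1/2}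
  + ((p-m-1)(q+b-2)-(q-n-1)(p+a-2)) ŵ^{p+q-3/2}_{m+n+1/2, a+b+1/2}`. -/
noncomputable def wbrP {K : Type*} [Field K] [CharZero K] (i j : Idx) : Idx →₀ K :=
  (((i.1 + i.2.1 - 1) * (j.1 - j.2.2 - 2) - (j.1 + j.2.1 - 1) * (i.1 - i.2.2 - 2) : ℚ) : K) •
      Finsupp.single (i.1 + j.1 - 3/2, i.2.1 + j.2.1 - 1/2, i.2.2 + j.2.2 - 1/2) (1 : K)
    + (((i.1 - i.2.1 - 1) * (j.1 + j.2.2 - 2) - (j.1 - j.2.1 - 1) * (i.1 + i.2.2 - 2) : ℚ) : K) •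
      Finsupp.single (i.1 + j.1 - 3/2, i.2.1 + j.2.1 + 1/2, i.2.2 + j.2.2 + 1/2) (1 : K)

/-- Bilinear extension of the bracket to the free module on the generators. -/
noncomputable def brP {K : Type*} [Field K] [CharZero K] (f g : Idx →₀ K) : Idx →₀ K :=
  f.sum fun i x => g.sum fun j y => (x * y) • wbrP i j

/-!
The bracket of two generators splits into two channels `ε = ±1`: channel `ε` shifts `(m, a)` by
`-ε/2` and has structure constant `coeff ε`. In a double bracket `{i, {j, k}}` taken through
channels `ε` (inner) and `δ` (outer), the resulting generator depends only on `ε + δ` and is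
symmetric in `i, j, k`. The Jacobi identity therefore splits into three scalar polynomial
identities, one per value of `ε + δ ∈ {2, 0, -2}`: the two diagonal ones hold for every `ε`,
the mixed one uses `ε² = 1`.
-/

open Finsupp

lemma sum_sum_mul_smul_eq_neg_of_antisymm {ι R M : Type*} [CommSemiring R] [AddCommGroup M]
    [Module R M] {B : ι → ι → M} (hB : ∀ i j, B j i = -B i j) (f g : ι →₀ R) :
    (f.sum fun i x => g.sum fun j y => (x * y) • B i j)
      = -(g.sum fun j y => f.sum fun i x => (y * x) • B j i) := by
  rw [Finsupp.sum_comm g]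
  simp only [Finsupp.sum, ← Finset.sum_neg_distrib]
  refine Finset.sum_congr rfl fun i _ => Finset.sum_congr rfl fun j _ => ?_
  rw [hB, smul_neg, mul_comm]

namespace PoincarePatch

/-- `coeff 1 i j` and `coeff (-1) i j` are the coefficients of `ŵ_{m+n-1/2, a+b-1/2}` and
`ŵ_{m+n+1/2, a+b+1/2}` in `wbrP i j`. -/
def coeff (ε : ℚ) (i j : Idx) : ℚ :=
  (i.1 + ε * i.2.1 - 1) * (j.1 - ε * j.2.2 - 2) - (j.1 + ε * j.2.1 - 1) * (i.1 - ε * i.2.2 - 2)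

def shift (ε : ℚ) (i j : Idx) : Idx :=
  (i.1 + j.1 - 3/2, i.2.1 + j.2.1 - ε/2, i.2.2 + j.2.2 - ε/2)

def target (s : ℚ) (i j k : Idx) : Idx :=
  (i.1 + j.1 + k.1 - 3, i.2.1 + j.2.1 + k.2.1 - s, i.2.2 + j.2.2 + k.2.2 - s)

def nestedCoeff (ε δ : ℚ) (i j k : Idx) : ℚ := coeff ε j k * coeff δ i (shift ε j k)

lemma coeff_swap (ε : ℚ) (i j : Idx) : coeff ε j i = -coeff ε i j := by
  unfold coeff; ring

lemma shift_comm (ε : ℚ) (i j : Idx) : shift ε j i = shift ε i j := by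
  unfold shift; ext <;> dsimp only <;> ring

lemma shift_shift (ε δ : ℚ) (i j k : Idx) :
    shift δ i (shift ε j k) = target ((ε + δ) / 2) i j k := by
  unfold shift target; ext <;> dsimp only <;> ring

lemma target_rotate (s : ℚ) (i j k : Idx) : target s j k i = target s i j k := by
  unfold target; ext <;> dsimp only <;> ring

lemma nestedCoeff_cyclic (ε : ℚ) (i j k : Idx) :
    nestedCoeff ε ε i j k + nestedCoeff ε ε j k i + nestedCoeff ε ε k i j = 0 := by
  unfold nestedCoeff coeff shift; ring

lemma nestedCoeff_mixed_cyclic (i j k : Idx) :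
    nestedCoeff 1 (-1) i j k + nestedCoeff (-1) 1 i j k
      + (nestedCoeff 1 (-1) j k i + nestedCoeff (-1) 1 j k i)
      + (nestedCoeff 1 (-1) k i j + nestedCoeff (-1) 1 k i j) = 0 := by
  unfold nestedCoeff coeff shift; ring

section Bracket

variable {K : Type*} [Field K] [CharZero K]

lemma wbrP_eq (i j : Idx) :
    wbrP (K := K) i j = (coeff 1 i j : K) • single (shift 1 i j) 1
      + (coeff (-1) i j : K) • single (shift (-1) i j) 1 := by
  unfold wbrP coeff shift
  norm_num [sub_eq_add_neg]

lemma wbrP_swap (i j : Idx) : wbrP (K := K) j i = -wbrP i j := by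
  rw [wbrP_eq, wbrP_eq, coeff_swap 1 i j, coeff_swap (-1) i j, shift_comm 1 i j,
    shift_comm (-1) i j, Rat.cast_neg, Rat.cast_neg, neg_smul, neg_smul, neg_add]

lemma brP_swap (f g : Idx →₀ K) : brP f g = -brP g f :=
  sum_sum_mul_smul_eq_neg_of_antisymm wbrP_swap f g

lemma brP_single_left (i : Idx) (g : Idx →₀ K) :
    brP (single i 1) g = linearCombination K (wbrP i) g := by
  rw [brP, sum_single_index (by simp), linearCombination_apply]
  simp only [one_mul]

lemma brP_single_single (i j : Idx) : brP (single i (1 : K)) (single j 1) = wbrP i j := by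
  rw [brP_single_left, linearCombination_single, one_smul]

lemma brP_single_wbrP (i j k : Idx) :
    brP (single i (1 : K)) (wbrP j k)
      = (nestedCoeff 1 1 i j k : K) • single (target 1 i j k) 1
        + ((nestedCoeff 1 (-1) i j k + nestedCoeff (-1) 1 i j k : ℚ) : K) •
            single (target 0 i j k) 1
        + (nestedCoeff (-1) (-1) i j k : K) • single (target (-1) i j k) 1 := by
  rw [brP_single_left, wbrP_eq j k, map_add, map_smul, map_smul, linearCombination_single,
    linearCombination_single, one_smul, one_smul, wbrP_eq, wbrP_eq, shift_shift, shift_shift,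
    shift_shift, shift_shift]
  norm_num only
  unfold nestedCoeff
  push_cast
  module

end Bracket

end PoincarePatch

open PoincarePatch

/-- The Poincaré-patch celestial chiral bracket is antisymmetric and satisfies
the Jacobi identity. -/
theorem poincare_bracket_lie {K : Type*} [Field K] [CharZero K] :
    (∀ f g : Idx →₀ K, brP f g = - brP g f) ∧
    (∀ i j k : Idx,
      brP (Finsupp.single i (1 : K)) (brP (Finsupp.single j 1) (Finsupp.single k 1))
      + brP (Finsupp.single j 1) (brP (Finsupp.single k 1) (Finsupp.single i 1))
      + brP (Finsupp.single k 1) (brP (Finsupp.single i 1) (Finsupp.single j 1)) = 0) := by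
  refine ⟨brP_swap, fun i j k => ?_⟩
  have hpos := congrArg (Rat.cast : ℚ → K) (nestedCoeff_cyclic 1 i j k)
  have hmix := congrArg (Rat.cast : ℚ → K) (nestedCoeff_mixed_cyclic i j k)
  have hneg := congrArg (Rat.cast : ℚ → K) (nestedCoeff_cyclic (-1) i j k)
  push_cast at hpos hmix hneg
  simp only [brP_single_single, brP_single_wbrP, target_rotate _ i j k, target_rotate _ j k i]
  push_cast
  linear_combination (norm := module) hpos • single (target 1 i j k) (1 : K)
    + hmix • single (target 0 i j k) (1 : K) + hneg • single (target (-1) i j k) (1 : K)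
end

section
/- The module action {w^p_{m,a}, x^q_{n,b}}_Λ = (m(q-1)-n(p-1)) x^{p+q-2}_{m+n,a+b} − Λ(a(q-s)-b(p-2)) x^{p+q-1}_{m+n,a+b} defines a Lie algebra module for the Λ-deformed celestial chiral algebra: for all generators, {w, {w', x}} − {w', {w, x}} = {{w,w'}, x}. -/
/-- The spin-`s` module action on basis elements:
`{w^p_{m,a}, x^q_{n,b}}_Λ = (m(q-1)-n(p-1)) x^{p+q-2}_{m+n,a+b}
                            − Λ(a(q-s)-b(p-2)) x^{p+q-1}_{m+n,a+b}`. -/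
noncomputable def wact {K : Type*} [Field K] [CharZero K] (Λ s : K) (i j : Idx) : Idx →₀ K :=
  ((i.2.1 * (j.1 - 1) - j.2.1 * (i.1 - 1) : ℚ) : K) •
      Finsupp.single (i.1 + j.1 - 2, i.2.1 + j.2.1, i.2.2 + j.2.2) (1 : K)
    - (Λ * (((i.2.2 : ℚ) : K) * (((j.1 : ℚ) : K) - s)
            - ((j.2.2 : ℚ) : K) * (((i.1 : ℚ) : K) - 2))) •
      Finsupp.single (i.1 + j.1 - 1, i.2.1 + j.2.1, i.2.2 + j.2.2) (1 : K)

/-- Bilinear extension of the action to the free modules. -/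
noncomputable def act {K : Type*} [Field K] [CharZero K] (Λ s : K)
    (f v : Idx →₀ K) : Idx →₀ K :=
  f.sum fun i x => v.sum fun j y => (x * y) • wact Λ s i j


/-! Write `x_d` for the basis vector `x^{p+q+r-d}_{m+n+l, a+b+c}`. Both sides of the module
identity for `w^p_{m,a}`, `w^q_{n,b}`, `x^r_{l,c}` lie in the span of `x_4`, `x_3`, `x_2`, whose
coefficients are the `Λ⁰`, `Λ¹` and `Λ²` parts. Comparing them reduces the identity to three
polynomial identities in the labels: the Jacobi identity of the undeformed bracket, and its
first- and second-order deformations. -/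

def weightShift (d : ℚ) : Idx := (d, 0, 0)

theorem weightShift_add (a b : ℚ) : weightShift (a + b) = weightShift a + weightShift b := by
  simp [weightShift]

theorem add_sub_weightShift (i j : Idx) (d : ℚ) :
    i + j - weightShift d = (i.1 + j.1 - d, i.2.1 + j.2.1, i.2.2 + j.2.2) := by
  ext <;> simp [weightShift]

theorem add_sub_weightShift_sub_weightShift (x y : Idx) {a b c : ℚ} (h : a + b = c) :
    x + (y - weightShift a) - weightShift b = x + y - weightShift c := by
  rw [← h, weightShift_add]
  abel

theorem sub_weightShift_add_sub_weightShift (x y : Idx) {a b c : ℚ} (h : a + b = c) :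
    x - weightShift a + y - weightShift b = x + y - weightShift c := by
  rw [← h, weightShift_add]
  abel

section Coefficients
variable {K : Type*} [Field K] [CharZero K]

def poissonCoeff (i j : Idx) : K :=
  (i.2.1 : K) * ((j.1 : K) - 1) - (j.2.1 : K) * ((i.1 : K) - 1)

def deformationCoeff (s : K) (i j : Idx) : K :=
  (i.2.2 : K) * ((j.1 : K) - s) - (j.2.2 : K) * ((i.1 : K) - 2)

variable (s : K) (i j k : Idx)

theorem poissonCoeff_jacobi :
    poissonCoeff j k * poissonCoeff i (j + k - weightShift 2)
        - poissonCoeff i k * poissonCoeff j (i + k - weightShift 2)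
      = (poissonCoeff i j * poissonCoeff (i + j - weightShift 2) k : K) := by
  simp only [poissonCoeff, weightShift, Prod.fst_add, Prod.snd_add, Prod.fst_sub, Prod.snd_sub]
  push_cast
  ring

theorem poissonCoeff_deformationCoeff_jacobi :
    (poissonCoeff j k * deformationCoeff s i (j + k - weightShift 2)
          + deformationCoeff s j k * poissonCoeff i (j + k - weightShift 1))
        - (poissonCoeff i k * deformationCoeff s j (i + k - weightShift 2)
          + deformationCoeff s i k * poissonCoeff j (i + k - weightShift 1))
      = poissonCoeff i j * deformationCoeff s (i + j - weightShift 2) k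
          + deformationCoeff 2 i j * poissonCoeff (i + j - weightShift 1) k := by
  simp only [poissonCoeff, deformationCoeff, weightShift, Prod.fst_add, Prod.snd_add,
    Prod.fst_sub, Prod.snd_sub]
  push_cast
  ring

theorem deformationCoeff_jacobi :
    deformationCoeff s j k * deformationCoeff s i (j + k - weightShift 1)
        - deformationCoeff s i k * deformationCoeff s j (i + k - weightShift 1)
      = deformationCoeff 2 i j * deformationCoeff s (i + j - weightShift 1) k := by
  simp only [deformationCoeff, weightShift, Prod.fst_add, Prod.snd_add, Prod.fst_sub,
    Prod.snd_sub]
  push_cast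
  ring

end Coefficients

section Action
variable {K : Type*} [Field K] [CharZero K] (Λ s : K)

theorem act_single_left (i : Idx) (v : Idx →₀ K) :
    act Λ s (Finsupp.single i 1) v = Finsupp.linearCombination K (wact Λ s i) v := by
  rw [act, Finsupp.sum_single_index (by simp), Finsupp.linearCombination_apply]
  simp only [one_mul]

theorem act_single_right (f : Idx →₀ K) (k : Idx) :
    act Λ s f (Finsupp.single k 1) = Finsupp.linearCombination K (fun i => wact Λ s i k) f := by
  rw [act, Finsupp.linearCombination_apply]
  refine Finsupp.sum_congr fun i _ => ?_
  rw [Finsupp.sum_single_index (by simp), mul_one]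

theorem br_single_single (i j : Idx) :
    br Λ (Finsupp.single i 1) (Finsupp.single j 1) = wbr Λ i j := by
  rw [br, Finsupp.sum_single_index (by simp), Finsupp.sum_single_index (by simp), one_mul,
    one_smul]

theorem wact_eq (i j : Idx) :
    wact Λ s i j = (poissonCoeff i j : K) • Finsupp.single (i + j - weightShift 2) 1
      - (Λ * deformationCoeff s i j) • Finsupp.single (i + j - weightShift 1) 1 := by
  simp only [wact, poissonCoeff, deformationCoeff, add_sub_weightShift]
  push_cast
  rfl

theorem wbr_eq (i j : Idx) :
    wbr Λ i j = (poissonCoeff i j : K) • Finsupp.single (i + j - weightShift 2) 1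
      - (Λ * deformationCoeff 2 i j) • Finsupp.single (i + j - weightShift 1) 1 := by
  simp only [wbr, poissonCoeff, deformationCoeff, add_sub_weightShift]
  push_cast
  rfl

variable (i j k : Idx)

theorem act_single_act_single :
    act Λ s (Finsupp.single i 1) (act Λ s (Finsupp.single j 1) (Finsupp.single k 1))
      = (poissonCoeff j k * poissonCoeff i (j + k - weightShift 2) : K)
            • Finsupp.single (i + j + k - weightShift 4) 1
        - (Λ * (poissonCoeff j k * deformationCoeff s i (j + k - weightShift 2)
            + deformationCoeff s j k * poissonCoeff i (j + k - weightShift 1)))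
            • Finsupp.single (i + j + k - weightShift 3) 1
        + (Λ ^ 2 * (deformationCoeff s j k * deformationCoeff s i (j + k - weightShift 1)))
            • Finsupp.single (i + j + k - weightShift 2) 1 := by
  simp only [act_single_left, Finsupp.linearCombination_single, one_smul, wact_eq, map_sub,
    map_smul]
  rw [add_sub_weightShift_sub_weightShift i (j + k) (by norm_num : (2 : ℚ) + 2 = 4),
    add_sub_weightShift_sub_weightShift i (j + k) (by norm_num : (2 : ℚ) + 1 = 3),
    add_sub_weightShift_sub_weightShift i (j + k) (by norm_num : (1 : ℚ) + 2 = 3),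
    add_sub_weightShift_sub_weightShift i (j + k) (by norm_num : (1 : ℚ) + 1 = 2), ← add_assoc]
  module

theorem act_wbr_single :
    act Λ s (wbr Λ i j) (Finsupp.single k 1)
      = (poissonCoeff i j * poissonCoeff (i + j - weightShift 2) k : K)
            • Finsupp.single (i + j + k - weightShift 4) 1
        - (Λ * (poissonCoeff i j * deformationCoeff s (i + j - weightShift 2) k
            + deformationCoeff 2 i j * poissonCoeff (i + j - weightShift 1) k))
            • Finsupp.single (i + j + k - weightShift 3) 1
        + (Λ ^ 2 * (deformationCoeff 2 i j * deformationCoeff s (i + j - weightShift 1) k))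
            • Finsupp.single (i + j + k - weightShift 2) 1 := by
  simp only [act_single_right, wbr_eq, map_sub, map_smul, Finsupp.linearCombination_single,
    one_smul, wact_eq]
  rw [sub_weightShift_add_sub_weightShift (i + j) k (by norm_num : (2 : ℚ) + 2 = 4),
    sub_weightShift_add_sub_weightShift (i + j) k (by norm_num : (2 : ℚ) + 1 = 3),
    sub_weightShift_add_sub_weightShift (i + j) k (by norm_num : (1 : ℚ) + 2 = 3),
    sub_weightShift_add_sub_weightShift (i + j) k (by norm_num : (1 : ℚ) + 1 = 2)]
  module

end Action

/-- The spin-`s` modes form a module (representation) of the Λ-deformed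
celestial chiral algebra: `{w,{w',x}} − {w',{w,x}} = {{w,w'},x}`. -/
theorem spin_s_modes_form_module {K : Type*} [Field K] [CharZero K] (Λ s : K)
    (i j k : Idx) :
    act Λ s (Finsupp.single i (1 : K)) (act Λ s (Finsupp.single j 1) (Finsupp.single k 1))
      - act Λ s (Finsupp.single j 1) (act Λ s (Finsupp.single i 1) (Finsupp.single k 1))
      = act Λ s (br Λ (Finsupp.single i 1) (Finsupp.single j 1)) (Finsupp.single k 1) := by
  rw [br_single_single, act_wbr_single, act_single_act_single, act_single_act_single,
    add_comm j i, ← poissonCoeff_jacobi, ← poissonCoeff_deformationCoeff_jacobi,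
    ← deformationCoeff_jacobi]
  module
end

section
/- For the Poisson bracket {f,g}_Λ on twistor functions and spin-s modes x^q_{n,b} = (μ⁰)^{q+n-1}(μ¹)^{q-n-1}/(2 λ₀^{q-b-s} λ₁^{q+b-s}), one computes {w^p_{m,a}, x^q_{n,b}}_Λ = (m(q-1)-n(p-1)) x^{p+q-2}_{m+n,a+b} − Λ(a(q-s)-b(p-2)) x^{p+q-1}_{m+n,a+b}. -/
lemma dmul (c : ℂ) (i : ℤ) (x : ℂ) :
    deriv (fun u : ℂ => c * u ^ i) x = c * ((i:ℂ) * x ^ (i-1)) := by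
  rw [deriv_const_mul_field, deriv_zpow]

/-- For the gravitational generators
`w^p_{m,a} = (1/2)(μ⁰)^{p+m-1}(μ¹)^{p-m-1} λ₀^{a+2-p} λ₁^{2-p-a}` and the
spin-`s` modes `x^q_{n,b} = (1/2)(μ⁰)^{q+n-1}(μ¹)^{q-n-1} λ₀^{b+s-q} λ₁^{s-q-b}`,
the Λ-deformed Poisson bracket evaluates to
`{w^p_{m,a}, x^q_{n,b}}_Λ = (m(q-1)-n(p-1)) x^{p+q-2}_{m+n,a+b}
                            − Λ(a(q-s)-b(p-2)) x^{p+q-1}_{m+n,a+b}`. -/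
theorem poisson_bracket_on_spin_s_modes (Λ : ℂ) (s : ℤ) (p m a q n b : ℚ)
    (k₁ k₂ e₁ e₂ l₁ l₂ g₁ g₂ : ℤ)
    (hk₁ : 0 ≤ k₁) (hk₂ : 0 ≤ k₂) (hl₁ : 0 ≤ l₁) (hl₂ : 0 ≤ l₂)
    (h₁ : (k₁ : ℚ) = p + m - 1) (h₂ : (k₂ : ℚ) = p - m - 1)
    (h₃ : (e₁ : ℚ) = a + 2 - p) (h₄ : (e₂ : ℚ) = 2 - p - a)
    (h₅ : (l₁ : ℚ) = q + n - 1) (h₆ : (l₂ : ℚ) = q - n - 1)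
    (h₇ : (g₁ : ℚ) = b + (s : ℚ) - q) (h₈ : (g₂ : ℚ) = (s : ℚ) - q - b)
    (x y u t : ℂ) (hx : x ≠ 0) (hy : y ≠ 0) (hu : u ≠ 0) (ht : t ≠ 0) :
    pb Λ (mon (1/2) k₁ k₂ e₁ e₂) (mon (1/2) l₁ l₂ g₁ g₂) x y u t
      = ((m * (q - 1) - n * (p - 1) : ℚ) : ℂ) *
          mon (1/2) (k₁ + l₁ - 1) (k₂ + l₂ - 1) (e₁ + g₁) (e₂ + g₂) x y u t
        - Λ * ((a * (q - (s : ℚ)) - b * (p - 2) : ℚ) : ℂ) *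
          mon (1/2) (k₁ + l₁) (k₂ + l₂) (e₁ + g₁ - 1) (e₂ + g₂ - 1) x y u t := by
  have H1 : ((k₁:ℂ) * l₂ - (k₂:ℂ) * l₁) = 2 * ((m * (q - 1) - n * (p - 1) : ℚ) : ℂ) := by
    have h : (k₁:ℚ) * l₂ - (k₂:ℚ) * l₁ = 2 * (m * (q - 1) - n * (p - 1)) := by
      rw [h₁, h₂, h₅, h₆]; ring
    exact_mod_cast h
  have H2 : ((e₁:ℂ) * g₂ - (e₂:ℂ) * g₁)
      = -2 * ((a * (q - (s : ℚ)) - b * (p - 2) : ℚ) : ℂ) := by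
    have h : (e₁:ℚ) * g₂ - (e₂:ℚ) * g₁ = -2 * (a * (q - (s : ℚ)) - b * (p - 2)) := by
      rw [h₃, h₄, h₇, h₈]; ring
    exact_mod_cast h
  have d1 : deriv (fun v : ℂ => 1/2 * v ^ k₁ * y ^ k₂ * u ^ e₁ * t ^ e₂) x
      = (1/2 * y ^ k₂ * u ^ e₁ * t ^ e₂) * ((k₁:ℂ) * x ^ (k₁-1)) := by
    rw [show (fun v : ℂ => 1/2 * v ^ k₁ * y ^ k₂ * u ^ e₁ * t ^ e₂)
        = fun v => (1/2 * y ^ k₂ * u ^ e₁ * t ^ e₂) * v ^ k₁ from funext fun v => by ring, dmul]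
  have d2 : deriv (fun v : ℂ => 1/2 * x ^ k₁ * v ^ k₂ * u ^ e₁ * t ^ e₂) y
      = (1/2 * x ^ k₁ * u ^ e₁ * t ^ e₂) * ((k₂:ℂ) * y ^ (k₂-1)) := by
    rw [show (fun v : ℂ => 1/2 * x ^ k₁ * v ^ k₂ * u ^ e₁ * t ^ e₂)
        = fun v => (1/2 * x ^ k₁ * u ^ e₁ * t ^ e₂) * v ^ k₂ from funext fun v => by ring, dmul]
  have d3 : deriv (fun v : ℂ => 1/2 * x ^ k₁ * y ^ k₂ * v ^ e₁ * t ^ e₂) u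
      = (1/2 * x ^ k₁ * y ^ k₂ * t ^ e₂) * ((e₁:ℂ) * u ^ (e₁-1)) := by
    rw [show (fun v : ℂ => 1/2 * x ^ k₁ * y ^ k₂ * v ^ e₁ * t ^ e₂)
        = fun v => (1/2 * x ^ k₁ * y ^ k₂ * t ^ e₂) * v ^ e₁ from funext fun v => by ring, dmul]
  have d4 : deriv (fun v : ℂ => 1/2 * x ^ k₁ * y ^ k₂ * u ^ e₁ * v ^ e₂) t
      = (1/2 * x ^ k₁ * y ^ k₂ * u ^ e₁) * ((e₂:ℂ) * t ^ (e₂-1)) := by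
    rw [show (fun v : ℂ => 1/2 * x ^ k₁ * y ^ k₂ * u ^ e₁ * v ^ e₂)
        = fun v => (1/2 * x ^ k₁ * y ^ k₂ * u ^ e₁) * v ^ e₂ from funext fun v => by ring, dmul]
  have d5 : deriv (fun v : ℂ => 1/2 * v ^ l₁ * y ^ l₂ * u ^ g₁ * t ^ g₂) x
      = (1/2 * y ^ l₂ * u ^ g₁ * t ^ g₂) * ((l₁:ℂ) * x ^ (l₁-1)) := by
    rw [show (fun v : ℂ => 1/2 * v ^ l₁ * y ^ l₂ * u ^ g₁ * t ^ g₂)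
        = fun v => (1/2 * y ^ l₂ * u ^ g₁ * t ^ g₂) * v ^ l₁ from funext fun v => by ring, dmul]
  have d6 : deriv (fun v : ℂ => 1/2 * x ^ l₁ * v ^ l₂ * u ^ g₁ * t ^ g₂) y
      = (1/2 * x ^ l₁ * u ^ g₁ * t ^ g₂) * ((l₂:ℂ) * y ^ (l₂-1)) := by
    rw [show (fun v : ℂ => 1/2 * x ^ l₁ * v ^ l₂ * u ^ g₁ * t ^ g₂)
        = fun v => (1/2 * x ^ l₁ * u ^ g₁ * t ^ g₂) * v ^ l₂ from funext fun v => by ring, dmul]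
  have d7 : deriv (fun v : ℂ => 1/2 * x ^ l₁ * y ^ l₂ * v ^ g₁ * t ^ g₂) u
      = (1/2 * x ^ l₁ * y ^ l₂ * t ^ g₂) * ((g₁:ℂ) * u ^ (g₁-1)) := by
    rw [show (fun v : ℂ => 1/2 * x ^ l₁ * y ^ l₂ * v ^ g₁ * t ^ g₂)
        = fun v => (1/2 * x ^ l₁ * y ^ l₂ * t ^ g₂) * v ^ g₁ from funext fun v => by ring, dmul]
  have d8 : deriv (fun v : ℂ => 1/2 * x ^ l₁ * y ^ l₂ * u ^ g₁ * v ^ g₂) t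
      = (1/2 * x ^ l₁ * y ^ l₂ * u ^ g₁) * ((g₂:ℂ) * t ^ (g₂-1)) := by
    rw [show (fun v : ℂ => 1/2 * x ^ l₁ * y ^ l₂ * u ^ g₁ * v ^ g₂)
        = fun v => (1/2 * x ^ l₁ * y ^ l₂ * u ^ g₁) * v ^ g₂ from funext fun v => by ring, dmul]
  simp only [pb, mon]
  rw [d1, d2, d3, d4, d5, d6, d7, d8]
  simp only [zpow_sub_one₀ hx, zpow_add₀ hx, zpow_sub_one₀ hy, zpow_add₀ hy,
    zpow_sub_one₀ hu, zpow_add₀ hu, zpow_sub_one₀ ht, zpow_add₀ ht]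
  linear_combination
    (1/4 * x ^ k₁ * x ^ l₁ * x⁻¹ * y ^ k₂ * y ^ l₂ * y⁻¹ *
      u ^ e₁ * u ^ g₁ * t ^ e₂ * t ^ g₂) * H1 +
    (Λ * (1/4 * x ^ k₁ * x ^ l₁ * y ^ k₂ * y ^ l₂ *
      u ^ e₁ * u ^ g₁ * u⁻¹ * t ^ e₂ * t ^ g₂ * t⁻¹)) * H2
end
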